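/- arXiv:1506.01773 — 4 statements merged into one kernel-verified Lean document; each statement's English description precedes it below -/
import Mathlib

section
/- Let K be an s×t complex matrix such that for every diagonal positive semidefinite t×t matrix δ_a with trace 1, the matrix K δ_a K† is diagonal. Then every column of K contains at most one nonzero entry. -/
/-!
Test the hypothesis on the pure incoherent state `|j⟩⟨j| = diagonal (Pi.single j 1)`.
Then `K |j⟩⟨j| Kᴴ` is the outer product of the `j`-th column of `K` with its conjugate, whose
`(i, m)` entry is `K i j * conj (K m j)`; it vanishes off the diagonal only if column `j` has at
most one nonzero entry.
-/

open Matrix ComplexOrder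

namespace Matrix

variable {m n α : Type*} [DecidableEq n]

theorem mul_diagonal_single_mul_conjTranspose_apply [Fintype n] [Semiring α] [StarRing α]
    (K : Matrix m n α) (j : n) (i k : m) :
    (K * diagonal (Pi.single j (1 : α)) * Kᴴ) i k = K i j * star (K k j) := by
  simp [mul_apply, diagonal_apply, Pi.single_apply]

theorem posSemidef_diagonal_single [Ring α] [PartialOrder α] [StarRing α]
    [StarOrderedRing α] (j : n) : (diagonal (Pi.single j (1 : α))).PosSemidef :=
  PosSemidef.diagonal (Pi.single_nonneg.mpr zero_le_one)

theorem trace_diagonal_single [Fintype n] [AddCommMonoidWithOne α] (j : n) :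
    (diagonal (Pi.single j (1 : α))).trace = 1 := by
  simp [trace_diagonal]

end Matrix

/-- If an `s × t` complex matrix `K` maps every diagonal positive semidefinite
trace-one matrix `δ` to a diagonal matrix under `δ ↦ K δ Kᴴ`, then every column of `K`
contains at most one nonzero entry. -/
theorem incoherent_kraus_column_structure {s t : ℕ} (K : Matrix (Fin s) (Fin t) ℂ)
    (hK : ∀ δ : Matrix (Fin t) (Fin t) ℂ,
      (∀ i j : Fin t, i ≠ j → δ i j = 0) → δ.PosSemidef → δ.trace = 1 →
      ∀ i m : Fin s, i ≠ m → (K * δ * Kᴴ) i m = 0) :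
    ∀ j : Fin t, ∀ i m : Fin s, K i j ≠ 0 → K m j ≠ 0 → i = m := by
  intro j i m hi hm
  by_contra him
  have h := hK (diagonal (Pi.single j 1)) (fun _ _ => diagonal_apply_ne _)
    (posSemidef_diagonal_single j) (trace_diagonal_single j) i m him
  rw [mul_diagonal_single_mul_conjTranspose_apply] at h
  exact mul_ne_zero hi (star_ne_zero.mpr hm) h
end

section
/- The basis-free coherence C^free(ρ) := min over local (tensor product) unitaries U of C(UρU†) equals the relative entropy of discord D(ρ) := min over product orthonormal bases B of [H(B,ρ) − S(ρ)], where H(B,ρ) = −Σ_k ⟨B_k|ρ|B_k⟩ log⟨B_k|ρ|B_k⟩ is the Shannon entropy of the measurement of ρ in basis B. -/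
open Matrix ComplexOrder

variable {N : ℕ} {d : Fin N → ℕ}

/-- The von Neumann entropy via eigenvalues (0 if not Hermitian). -/
noncomputable def vnEnt {ι : Type} [Fintype ι] [DecidableEq ι] (ρ : Matrix ι ι ℂ) : ℝ :=
  if h : ρ.IsHermitian then ∑ i, Real.negMulLog (h.eigenvalues i) else 0

/-- Relative entropy of coherence `C(σ) = S(σ_I) - S(σ)` in the fixed (product) basis. -/
noncomputable def cohRE {ι : Type} [Fintype ι] [DecidableEq ι] (σ : Matrix ι ι ℂ) : ℝ :=
  vnEnt (Matrix.diagonal (fun k => σ k k)) - vnEnt σ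

/-- The Kronecker (tensor) product of a family of local operators, acting on the
multipartite index `∀ i, Fin (d i)`. -/
noncomputable def kron (U : ∀ i, Matrix (Fin (d i)) (Fin (d i)) ℂ) :
    Matrix (∀ i, Fin (d i)) (∀ i, Fin (d i)) ℂ :=
  fun k l => ∏ i, U i (k i) (l i)

/-- The product orthonormal basis vector `|B(k⃗)⟩` obtained from a family `V` of local unitaries:
its components are products of the columns of the `V i`. -/
noncomputable def basisVec (V : ∀ i, Matrix (Fin (d i)) (Fin (d i)) ℂ)
    (k : ∀ i, Fin (d i)) : (∀ i, Fin (d i)) → ℂ :=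
  fun l => ∏ i, V i (l i) (k i)

/-!
For a local unitary `U = U₁ ⊗ … ⊗ U_N`, conjugation preserves the spectrum, so
`S(UρU†) = S(ρ)`, and the diagonal entries of `UρU†` are the outcome probabilities
`⟨B(k⃗)|ρ|B(k⃗)⟩` of measuring `ρ` in the product basis `B(k⃗) = U†|k⃗⟩`. Hence `C(UρU†)` is the
discord objective of the basis given by `U†`, and since `U ↦ U†` is a bijection of local
unitaries the two sets over which the infima are taken coincide.
-/

lemma Matrix.mul_mul_conjTranspose_apply_self {n R : Type*} [Fintype n] [NonUnitalSemiring R]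
    [StarRing R] (A ρ : Matrix n n R) (k : n) :
    (A * ρ * Aᴴ) k k = A k ⬝ᵥ ρ *ᵥ star (A k) := by
  rw [mul_mul_apply]
  rfl

lemma Matrix.charpoly_unitary_conj {n R : Type*} [Fintype n] [DecidableEq n] [CommRing R]
    [StarRing R] {U : Matrix n n R} (hU : U ∈ unitaryGroup n R) (A : Matrix n n R) :
    (U * A * Uᴴ).charpoly = A.charpoly := by
  rw [charpoly_mul_comm, ← Matrix.mul_assoc, ← star_eq_conjTranspose,
    mem_unitaryGroup_iff'.mp hU, Matrix.one_mul]

open Polynomial in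
lemma Matrix.IsHermitian.sum_comp_eigenvalues_of_charpoly_eq {n 𝕜 : Type*} [Fintype n]
    [DecidableEq n] [RCLike 𝕜] {A : Matrix n n 𝕜} (hA : A.IsHermitian) {r : n → ℝ}
    (h : A.charpoly = ∏ i, (X - C (r i : 𝕜))) (f : ℝ → ℝ) :
    ∑ i, f (hA.eigenvalues i) = ∑ i, f (r i) := by
  have hroots : Multiset.map ((RCLike.ofReal : ℝ → 𝕜) ∘ hA.eigenvalues) Finset.univ.val =
      Multiset.map (RCLike.ofReal ∘ r) Finset.univ.val := by
    rw [← hA.roots_charpoly_eq_eigenvalues, h,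
      roots_prod _ _ (by simp [Finset.prod_ne_zero_iff, X_sub_C_ne_zero])]
    simp
  have hsum := congrArg (fun s => (Multiset.map (f ∘ RCLike.re) s).sum) hroots
  simp only [Multiset.map_map, Function.comp_def, RCLike.ofReal_re] at hsum
  exact hsum

section Entropy

open Polynomial

variable {n : Type} [Fintype n] [DecidableEq n]

lemma vnEnt_eq_sum_negMulLog_of_charpoly_eq {A : Matrix n n ℂ} (hA : A.IsHermitian)
    {r : n → ℝ} (h : A.charpoly = ∏ i, (X - C (r i : ℂ))) :
    vnEnt A = ∑ i, Real.negMulLog (r i) := by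
  rw [vnEnt, dif_pos hA, hA.sum_comp_eigenvalues_of_charpoly_eq h]

lemma vnEnt_diagonal_ofReal (r : n → ℝ) :
    vnEnt (diagonal fun i => (r i : ℂ)) = ∑ i, Real.negMulLog (r i) :=
  vnEnt_eq_sum_negMulLog_of_charpoly_eq
    (isHermitian_diagonal_of_self_adjoint _ (funext fun i => Complex.conj_ofReal (r i)))
    (charpoly_diagonal _)

lemma vnEnt_unitary_conj {U : Matrix n n ℂ} (hU : U ∈ unitaryGroup n ℂ) {A : Matrix n n ℂ}
    (hA : A.IsHermitian) : vnEnt (U * A * Uᴴ) = vnEnt A := by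
  rw [vnEnt_eq_sum_negMulLog_of_charpoly_eq (isHermitian_mul_mul_conjTranspose U hA)
    (r := hA.eigenvalues) (by rw [charpoly_unitary_conj hU, hA.charpoly_eq]; rfl),
    vnEnt, dif_pos hA]

end Entropy

lemma kron_mul (A B : ∀ i, Matrix (Fin (d i)) (Fin (d i)) ℂ) :
    kron (fun i => A i * B i) = kron A * kron B := by
  ext k l
  simp only [kron, mul_apply]
  rw [Finset.prod_univ_sum, Fintype.piFinset_univ]
  exact Finset.sum_congr rfl fun m _ => Finset.prod_mul_distrib

lemma kron_conjTranspose (A : ∀ i, Matrix (Fin (d i)) (Fin (d i)) ℂ) :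
    (kron A)ᴴ = kron fun i => (A i)ᴴ := by
  ext k l
  simp [kron, conjTranspose_apply]

lemma kron_one : kron (fun i => (1 : Matrix (Fin (d i)) (Fin (d i)) ℂ)) = 1 := by
  ext k l
  simp [kron, one_apply, Finset.prod_boole, funext_iff]

lemma kron_mem_unitaryGroup {U : ∀ i, Matrix (Fin (d i)) (Fin (d i)) ℂ}
    (hU : ∀ i, U i ∈ unitaryGroup (Fin (d i)) ℂ) :
    kron U ∈ unitaryGroup (∀ i, Fin (d i)) ℂ := by
  rw [mem_unitaryGroup_iff, star_eq_conjTranspose, kron_conjTranspose, ← kron_mul]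
  simp_rw [← star_eq_conjTranspose, mem_unitaryGroup_iff.mp (hU _), kron_one]

lemma basisVec_conjTranspose (U : ∀ i, Matrix (Fin (d i)) (Fin (d i)) ℂ) (k : ∀ i, Fin (d i)) :
    basisVec (fun i => (U i)ᴴ) k = star (kron U k) := by
  ext l
  simp [basisVec, kron, conjTranspose_apply]

lemma cohRE_kron_conj {ρ : Matrix (∀ i, Fin (d i)) (∀ i, Fin (d i)) ℂ} (hρ : ρ.IsHermitian)
    {U : ∀ i, Matrix (Fin (d i)) (Fin (d i)) ℂ} (hU : ∀ i, U i ∈ unitaryGroup (Fin (d i)) ℂ) :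
    cohRE (kron U * ρ * (kron U)ᴴ) =
      (∑ k, Real.negMulLog ((star (basisVec (fun i => (U i)ᴴ) k) ⬝ᵥ
        ρ *ᵥ basisVec (fun i => (U i)ᴴ) k).re)) - vnEnt ρ := by
  have hσ := isHermitian_mul_mul_conjTranspose (kron U) hρ
  have hdiag : (fun k => (kron U * ρ * (kron U)ᴴ) k k) =
      fun k => (((kron U * ρ * (kron U)ᴴ) k k).re : ℂ) :=
    funext fun k => (hσ.coe_re_apply_self k).symm
  rw [cohRE, hdiag, vnEnt_diagonal_ofReal,
    vnEnt_unitary_conj (kron_mem_unitaryGroup hU) hρ]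
  simp_rw [basisVec_conjTranspose, star_star, mul_mul_conjTranspose_apply_self]

theorem basisFree_coherence_eq_discord_general (ρ : Matrix (∀ i, Fin (d i)) (∀ i, Fin (d i)) ℂ)
    (hρ : ρ.PosSemidef) :
    sInf {x : ℝ | ∃ U : ∀ i, Matrix (Fin (d i)) (Fin (d i)) ℂ,
        (∀ i, U i ∈ Matrix.unitaryGroup (Fin (d i)) ℂ) ∧
        x = cohRE (kron U * ρ * (kron U)ᴴ)} =
    sInf {x : ℝ | ∃ V : ∀ i, Matrix (Fin (d i)) (Fin (d i)) ℂ,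
        (∀ i, V i ∈ Matrix.unitaryGroup (Fin (d i)) ℂ) ∧
        x = (∑ k : ∀ i, Fin (d i),
              Real.negMulLog ((star (basisVec V k) ⬝ᵥ ρ.mulVec (basisVec V k)).re))
            - vnEnt ρ} := by
  congr 1
  ext x
  constructor
  · rintro ⟨U, hU, rfl⟩
    exact ⟨fun i => (U i)ᴴ, fun i => Unitary.star_mem (hU i), cohRE_kron_conj hρ.isHermitian hU⟩
  · rintro ⟨V, hV, rfl⟩
    have hV' : ∀ i, (V i)ᴴ ∈ unitaryGroup (Fin (d i)) ℂ := fun i => Unitary.star_mem (hV i)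
    refine ⟨fun i => (V i)ᴴ, hV', ?_⟩
    simpa only [conjTranspose_conjTranspose] using (cohRE_kron_conj hρ.isHermitian hV').symm

/-- The basis-free coherence, i.e. the infimum of the relative entropy of
coherence `C(UρU†)` over all local (tensor product) unitaries `U = U₁⊗…⊗U_N`, equals the
relative entropy of discord, i.e. the infimum over all product orthonormal bases `B` of
`H(B,ρ) - S(ρ)`, where `H(B,ρ) = ∑_k negMulLog ⟨B(k⃗)|ρ|B(k⃗)⟩` is the Shannon entropy of
the measurement of `ρ` in the basis `B`. -/
theorem basisFree_coherence_eq_discord (ρ : Matrix (∀ i, Fin (d i)) (∀ i, Fin (d i)) ℂ)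
    (hρ : ρ.PosSemidef) (htr : ρ.trace = 1) :
    sInf {x : ℝ | ∃ U : ∀ i, Matrix (Fin (d i)) (Fin (d i)) ℂ,
        (∀ i, U i ∈ Matrix.unitaryGroup (Fin (d i)) ℂ) ∧
        x = cohRE (kron U * ρ * (kron U)ᴴ)} =
    sInf {x : ℝ | ∃ V : ∀ i, Matrix (Fin (d i)) (Fin (d i)) ℂ,
        (∀ i, V i ∈ Matrix.unitaryGroup (Fin (d i)) ℂ) ∧
        x = (∑ k : ∀ i, Fin (d i),
              Real.negMulLog ((star (basisVec V k) ⬝ᵥ ρ.mulVec (basisVec V k)).re))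
            - vnEnt ρ} :=
  basisFree_coherence_eq_discord_general ρ hρ
end

section
/- Let 0 ≤ δ₁ ≤ δ₂ ≤ δ₃ ≤ δ₄ with Σδᵢ = 1, and define F(p) = h(pδ₁+(1−p)δ₃) + h(pδ₂+(1−p)δ₄) + h(pδ₃+(1−p)δ₁) + h(pδ₄+(1−p)δ₂) for p ∈ [0,1], where h(x) = −x log₂ x. Then F is maximized at p = 1/2, with maximum value 1 − (δ₁+δ₃)log₂(δ₁+δ₃) − (δ₂+δ₄)log₂(δ₂+δ₄). -/
/-! `F` splits into the two symmetric pairs `{δ₁, δ₃}` and `{δ₂, δ₄}`; in each pair the two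
arguments of `h` average to the pair's midpoint, so concavity of `h` bounds each pair by its
value at `p = 1/2`. There `h(x/2) = (x - x log₂ x)/2`, and `δ₁ + δ₂ + δ₃ + δ₄ = 1` gives the
constant `1`. -/

/-- `h(x) = -x log₂ x` (with `h(0) = 0`, using `Real.logb 2 0 = 0`). -/
noncomputable def h2 (x : ℝ) : ℝ := -(x * Real.logb 2 x)

lemma h2_eq_smul_negMulLog (x : ℝ) : h2 x = (Real.log 2)⁻¹ • Real.negMulLog x := by
  simp only [h2, Real.negMulLog, Real.logb, smul_eq_mul]
  ring

lemma concaveOn_h2 : ConcaveOn ℝ (Set.Ici 0) h2 := by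
  simpa only [← h2_eq_smul_negMulLog] using
    Real.concaveOn_negMulLog.smul (inv_nonneg.mpr (Real.log_nonneg one_le_two))

lemma h2_mix_add_h2_mix_le {a b p : ℝ} (ha : 0 ≤ a) (hb : 0 ≤ b) (hp : p ∈ Set.Icc (0 : ℝ) 1) :
    h2 (p * a + (1 - p) * b) + h2 (p * b + (1 - p) * a) ≤ 2 * h2 ((a + b) / 2) := by
  obtain ⟨hp0, hp1⟩ := hp
  have hq : 0 ≤ 1 - p := sub_nonneg.mpr hp1
  have hmid := concaveOn_h2.2
    (Set.mem_Ici.mpr (by positivity : 0 ≤ p * a + (1 - p) * b))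
    (Set.mem_Ici.mpr (by positivity : 0 ≤ p * b + (1 - p) * a))
    (by norm_num : (0 : ℝ) ≤ 1 / 2) (by norm_num : (0 : ℝ) ≤ 1 / 2) (by norm_num)
  simp only [smul_eq_mul] at hmid
  rw [show 1 / 2 * (p * a + (1 - p) * b) + 1 / 2 * (p * b + (1 - p) * a) = (a + b) / 2 by ring]
    at hmid
  linarith

lemma two_mul_h2_half (x : ℝ) : 2 * h2 (x / 2) = x - x * Real.logb 2 x := by
  rcases eq_or_ne x 0 with rfl | hx
  · simp [h2]
  · simp only [h2, Real.logb_div hx two_ne_zero, Real.logb_self_eq_one one_lt_two]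
    ring

/-- For `0 ≤ δ₁ ≤ δ₂ ≤ δ₃ ≤ δ₄` with `δ₁+δ₂+δ₃+δ₄ = 1`, the function
`F(p) = h(pδ₁+(1−p)δ₃) + h(pδ₂+(1−p)δ₄) + h(pδ₃+(1−p)δ₁) + h(pδ₄+(1−p)δ₂)` on `[0,1]`
is maximized at `p = 1/2`, with maximum value
`1 − (δ₁+δ₃)log₂(δ₁+δ₃) − (δ₂+δ₄)log₂(δ₂+δ₄)`. -/
theorem one_side_unitary_optimal_coherence (δ₁ δ₂ δ₃ δ₄ : ℝ)
    (h0 : 0 ≤ δ₁) (h12 : δ₁ ≤ δ₂) (h23 : δ₂ ≤ δ₃) (h34 : δ₃ ≤ δ₄)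
    (hsum : δ₁ + δ₂ + δ₃ + δ₄ = 1)
    (F : ℝ → ℝ)
    (hF : ∀ p, F p = h2 (p * δ₁ + (1 - p) * δ₃) + h2 (p * δ₂ + (1 - p) * δ₄)
      + h2 (p * δ₃ + (1 - p) * δ₁) + h2 (p * δ₄ + (1 - p) * δ₂)) :
    (∀ p ∈ Set.Icc (0 : ℝ) 1, F p ≤ F (1 / 2)) ∧
    F (1 / 2) = 1 - (δ₁ + δ₃) * Real.logb 2 (δ₁ + δ₃)
      - (δ₂ + δ₄) * Real.logb 2 (δ₂ + δ₄) := by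
  have hδ₂ : 0 ≤ δ₂ := h0.trans h12
  have hδ₃ : 0 ≤ δ₃ := hδ₂.trans h23
  have hδ₄ : 0 ≤ δ₄ := hδ₃.trans h34
  have hF_half : F (1 / 2) = 2 * h2 ((δ₁ + δ₃) / 2) + 2 * h2 ((δ₂ + δ₄) / 2) := by
    rw [hF]
    ring_nf
  refine ⟨fun p hp => ?_, ?_⟩
  · rw [hF, hF_half]
    linarith [h2_mix_add_h2_mix_le h0 hδ₃ hp, h2_mix_add_h2_mix_le hδ₂ hδ₄ hp]
  · rw [hF_half, two_mul_h2_half, two_mul_h2_half]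
    linarith
end

section
/- Let a = |α|², b = |β|², c = |γ|² be nonnegative reals with a + b + c = 1. Then (1−a)log₂(1−a) + (1−b)log₂(1−b) − c log₂ c ≤ 0, with the convention 0 log 0 = 0. Equivalently, for the generalized W state, C(ρ_AB) + C(ρ_AC) ≤ C(ρ_ABC). -/
/-!
Write `1 - a` and `1 - b` as the two "swapped" convex combinations of `c` and `1` with weights
`a / (a + b)` and `b / (a + b)`. Convexity of `x ↦ x log x` bounds the sum of its values there by
its values at `c` and at `1`, and the latter vanishes.
-/

theorem ConvexOn.map_add_map_swap_le {𝕜 E β : Type*} [Semiring 𝕜] [PartialOrder 𝕜]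
    [AddCommMonoid E] [AddCommMonoid β] [PartialOrder β] [IsOrderedAddMonoid β]
    [SMul 𝕜 E] [Module 𝕜 β] {s : Set E} {f : E → β} (hf : ConvexOn 𝕜 s f)
    {x y : E} (hx : x ∈ s) (hy : y ∈ s) {μ ν : 𝕜} (hμ : 0 ≤ μ) (hν : 0 ≤ ν) (hμν : μ + ν = 1) :
    f (μ • x + ν • y) + f (ν • x + μ • y) ≤ f x + f y :=
  calc f (μ • x + ν • y) + f (ν • x + μ • y)
      ≤ (μ • f x + ν • f y) + (ν • f x + μ • f y) :=
        add_le_add (hf.2 hx hy hμ hν hμν) (hf.2 hx hy hν hμ (by rwa [add_comm]))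
    _ = (μ + ν) • f x + (μ + ν) • f y := by rw [add_smul, add_smul]; abel
    _ = f x + f y := by rw [hμν, one_smul, one_smul]

theorem Real.one_sub_mul_log_one_sub_add_le {a b c : ℝ} (ha : 0 ≤ a) (hb : 0 ≤ b) (hc : 0 ≤ c)
    (hsum : a + b + c = 1) :
    (1 - a) * log (1 - a) + (1 - b) * log (1 - b) ≤ c * log c := by
  rcases (add_nonneg ha hb).eq_or_lt with hab | hab
  · obtain ⟨rfl, rfl⟩ : a = 0 ∧ b = 0 := ⟨by linarith, by linarith⟩
    obtain rfl : c = 1 := by linarith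
    simp
  have hμν : a / (a + b) + b / (a + b) = 1 := by field_simp
  have h := convexOn_mul_log.map_add_map_swap_le (Set.mem_Ici.mpr hc)
    (Set.mem_Ici.mpr zero_le_one) (by positivity) (by positivity) hμν
  have hx : a / (a + b) * c + b / (a + b) * 1 = 1 - a := by
    field_simp; linear_combination a * hsum
  have hy : b / (a + b) * c + a / (a + b) * 1 = 1 - b := by
    field_simp; linear_combination b * hsum
  simpa only [smul_eq_mul, hx, hy, log_one, mul_zero, add_zero] using h

/-- For nonnegative reals `a, b, c` with `a + b + c = 1`,
`(1−a)log₂(1−a) + (1−b)log₂(1−b) − c log₂ c ≤ 0` (with the convention `0 log 0 = 0`,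
as `Real.logb 2 0 = 0`). Equivalently, for the generalized W state the additivity
inequality `C(ρ_AB) + C(ρ_AC) ≤ C(ρ_ABC)` holds. -/
theorem W_state_additivity (a b c : ℝ) (ha : 0 ≤ a) (hb : 0 ≤ b) (hc : 0 ≤ c)
    (hsum : a + b + c = 1) :
    (1 - a) * Real.logb 2 (1 - a) + (1 - b) * Real.logb 2 (1 - b)
      - c * Real.logb 2 c ≤ 0 := by
  have h := Real.one_sub_mul_log_one_sub_add_le ha hb hc hsum
  simp only [Real.logb, ← mul_div_assoc, ← add_div, ← sub_div]
  exact div_nonpos_of_nonpos_of_nonneg (by linarith) (Real.log_nonneg one_le_two)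
end
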